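/- arXiv:2006.06279 — 2 statements merged into one kernel-verified Lean document; each statement's English description precedes it below -/
import Mathlib

section
/- Let $(X,\mathfrak{F},\mu)$ be a measure space, $p \geq 1$, and let $\Phi : L^p(X;\mathbb{C}) \to \mathbb{C}$ satisfy the valuation property $\Phi(f \vee g) + \Phi(f \wedge g) = \Phi(f) + \Phi(g)$ for all $f,g$, and $\Phi(0) = 0$. Then for every $f \in L^p(X;\mathbb{C})$, $\Phi(f) = \Phi(\Re f) + \Phi(i \Im f)$, where $\Re f$ and $i\Im f$ are regarded as elements of $L^p(X;\mathbb{C})$. -/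
open MeasureTheory Complex

/-- The componentwise lattice join of complex-valued functions. -/
noncomputable def fVee {X : Type*} (f g : X → ℂ) : X → ℂ :=
  fun x => ⟨max (f x).re (g x).re, max (f x).im (g x).im⟩

/-- The componentwise lattice meet of complex-valued functions. -/
noncomputable def fWedge {X : Type*} (f g : X → ℂ) : X → ℂ :=
  fun x => ⟨min (f x).re (g x).re, min (f x).im (g x).im⟩

/-! Since `Re f` and `i Im f` live on orthogonal axes, `Re f ∨ i Im f = f ∨ 0` and
`Re f ∧ i Im f = f ∧ 0`. The valuation identity for the pair `(Re f, i Im f)` and for the pair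
`(f, 0)` therefore has the same left-hand side, so `Φ (Re f) + Φ (i Im f) = Φ f + Φ 0 = Φ f`. -/

theorem fVee_ofReal_re_I_mul_im {X : Type*} (f : X → ℂ) :
    fVee (fun x => ((f x).re : ℂ)) (fun x => I * ((f x).im : ℂ)) = fVee f 0 := by
  funext x
  apply Complex.ext <;> simp [fVee, max_comm]

theorem fWedge_ofReal_re_I_mul_im {X : Type*} (f : X → ℂ) :
    fWedge (fun x => ((f x).re : ℂ)) (fun x => I * ((f x).im : ℂ)) = fWedge f 0 := by
  funext x
  apply Complex.ext <;> simp [fWedge, min_comm]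

theorem valuation_split_re_im_general {X : Type*} [MeasurableSpace X] (μ : Measure X) (p : ℝ)
    (Φ : (X → ℂ) → ℂ)
    (hval : ∀ f g : X → ℂ, MemLp f (ENNReal.ofReal p) μ → MemLp g (ENNReal.ofReal p) μ →
      Φ (fVee f g) + Φ (fWedge f g) = Φ f + Φ g)
    (hΦ0 : Φ 0 = 0)
    (f : X → ℂ) (hf : MemLp f (ENNReal.ofReal p) μ) :
    Φ f = Φ (fun x => ((f x).re : ℂ)) + Φ (fun x => Complex.I * ((f x).im : ℂ)) := by
  have hre : MemLp (fun x => ((f x).re : ℂ)) (ENNReal.ofReal p) μ := hf.re.ofReal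
  have him : MemLp (fun x => I * ((f x).im : ℂ)) (ENNReal.ofReal p) μ :=
    hf.im.ofReal.const_mul I
  have hsplit := hval f 0 hf MemLp.zero
  rw [← fVee_ofReal_re_I_mul_im, ← fWedge_ofReal_re_I_mul_im, hval _ _ hre him, hΦ0] at hsplit
  linear_combination -hsplit

theorem valuation_split_re_im {X : Type*} [MeasurableSpace X] (μ : Measure X) (p : ℝ)
    (hp : 1 ≤ p) (Φ : (X → ℂ) → ℂ)
    (hval : ∀ f g : X → ℂ, MemLp f (ENNReal.ofReal p) μ → MemLp g (ENNReal.ofReal p) μ →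
      Φ (fVee f g) + Φ (fWedge f g) = Φ f + Φ g)
    (hΦ0 : Φ 0 = 0)
    (f : X → ℂ) (hf : MemLp f (ENNReal.ofReal p) μ) :
    Φ f = Φ (fun x => ((f x).re : ℂ)) + Φ (fun x => Complex.I * ((f x).im : ℂ)) :=
  valuation_split_re_im_general μ p Φ hval hΦ0 f hf
end

section
/- Let $(X,\mathfrak{F},\mu)$ be a measure space with $\mu(X) = \infty$, $p \geq 1$, and $h_1,h_2,h_3,h_4 : \mathbb{R} \to \mathbb{R}$ continuous with $|h_k(a)| \leq \gamma_k|a|^p$ for all $a$. Define $\Phi(f) = \int_X(h_1 \circ \Re f + h_3 \circ \Im f)d\mu + i\int_X(h_2 \circ \Re f + h_4 \circ \Im f)d\mu$ on $L^p(X;\mathbb{C})$. If $f_j \to f$ in $L^p(X;\mathbb{C})$ norm and $\mu$-a.e., then $\Phi(f_j) \to \Phi(f)$. -/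
/-!
Each component of `Phi` is an integral `∫ Ψ ∘ f` with `Ψ` continuous and `‖Ψ z‖ ≤ γ ‖z‖ ^ p`.
Writing `f_j = (f_j - g) + g` and using convexity of `t ↦ t ^ p`,
`‖Ψ (f_j) - Ψ g‖ ≤ a_j + b` with `∫ a_j = C ‖f_j - g‖_p ^ p → 0` and `b = C' ‖g‖ ^ p` integrable.
Dominated convergence applied to `min (‖Ψ (f_j) - Ψ g‖) b`, which tends to `0` a.e., then gives
`Ψ ∘ f_j → Ψ ∘ g` in `L¹`.
-/

open MeasureTheory Complex Filter
open scoped ENNReal Topology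

/-- The integral valuation associated to `h₁, h₂, h₃, h₄`. -/
noncomputable def Phi {X : Type*} [MeasurableSpace X] (μ : Measure X)
    (h₁ h₂ h₃ h₄ : ℝ → ℝ) (f : X → ℂ) : ℂ :=
  ((∫ x, (h₁ (f x).re + h₃ (f x).im) ∂μ : ℝ) : ℂ) +
    Complex.I * ((∫ x, (h₂ (f x).re + h₄ (f x).im) ∂μ : ℝ) : ℂ)

section

variable {X E F : Type*} [MeasurableSpace X] {μ : Measure X}
  [NormedAddCommGroup E] [NormedAddCommGroup F]

theorem tendsto_lintegral_zero_of_le_add {φ a : ℕ → X → ℝ≥0∞} {b : X → ℝ≥0∞}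
    (hφ : ∀ n, AEMeasurable (φ n) μ) (hb : AEMeasurable b μ) (hle : ∀ n, φ n ≤ᵐ[μ] a n + b)
    (hφ0 : ∀ᵐ x ∂μ, Tendsto (fun n => φ n x) atTop (𝓝 0))
    (ha : Tendsto (fun n => ∫⁻ x, a n x ∂μ) atTop (𝓝 0)) (hb_fin : ∫⁻ x, b x ∂μ ≠ ∞) :
    Tendsto (fun n => ∫⁻ x, φ n x ∂μ) atTop (𝓝 0) := by
  have hmin : Tendsto (fun n => ∫⁻ x, min (φ n x) (b x) ∂μ) atTop (𝓝 0) := by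
    have := tendsto_lintegral_of_dominated_convergence' b (fun n => (hφ n).min hb)
      (fun n => ae_of_all _ fun x => min_le_right _ _) hb_fin
      (hφ0.mono fun x hx => by simpa using hx.min tendsto_const_nhds)
    rwa [lintegral_zero] at this
  have hsplit : ∀ n, ∫⁻ x, φ n x ∂μ ≤ ∫⁻ x, min (φ n x) (b x) ∂μ + ∫⁻ x, a n x ∂μ := by
    intro n
    calc ∫⁻ x, φ n x ∂μ ≤ ∫⁻ x, min (φ n x) (b x) + a n x ∂μ := by
          refine lintegral_mono_ae ((hle n).mono fun x hx => ?_)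
          rw [← min_add_add_right]
          exact le_min le_self_add (by simpa [add_comm] using hx)
      _ = ∫⁻ x, min (φ n x) (b x) ∂μ + ∫⁻ x, a n x ∂μ :=
          lintegral_add_left' ((hφ n).min hb) _
  exact tendsto_of_tendsto_of_tendsto_of_le_of_le tendsto_const_nhds
    (by simpa using hmin.add ha) (fun _ => zero_le) hsplit

theorem lintegral_enorm_rpow_eq_eLpNorm_rpow {p : ℝ} (hp : 0 < p) (f : X → E) :
    ∫⁻ x, ‖f x‖ₑ ^ p ∂μ = eLpNorm f (ENNReal.ofReal p) μ ^ p := by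
  rw [eLpNorm_eq_eLpNorm' (by simpa using hp) ENNReal.ofReal_ne_top,
    ENNReal.toReal_ofReal hp.le, lintegral_rpow_enorm_eq_rpow_eLpNorm' hp]

theorem MeasureTheory.MemLp.integrable_comp_of_norm_le_rpow {Ψ : E → F} {γ p : ℝ} (hp : 0 < p)
    (hΨ : Continuous Ψ) (hΨ_le : ∀ z, ‖Ψ z‖ ≤ γ * ‖z‖ ^ p) {f : X → E}
    (hf : MemLp f (ENNReal.ofReal p) μ) :
    Integrable (fun x => Ψ (f x)) μ := by
  have hint := hf.integrable_norm_rpow (by simpa using hp) ENNReal.ofReal_ne_top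
  rw [ENNReal.toReal_ofReal hp.le] at hint
  exact (hint.const_mul γ).mono' (hΨ.comp_aestronglyMeasurable hf.1)
    (ae_of_all _ fun x => hΨ_le (f x))

theorem enorm_sub_le_of_norm_le_rpow {Ψ : E → F} {γ p : ℝ} (hp : 1 ≤ p) (hγ : 0 ≤ γ)
    (hΨ_le : ∀ z, ‖Ψ z‖ ≤ γ * ‖z‖ ^ p) (z w : E) :
    ‖Ψ z - Ψ w‖ₑ ≤ ENNReal.ofReal γ * 2 ^ (p - 1) * ‖z - w‖ₑ ^ p
      + ENNReal.ofReal γ * (2 ^ (p - 1) + 1) * ‖w‖ₑ ^ p := by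
  have henorm : ∀ v, ‖Ψ v‖ₑ ≤ ENNReal.ofReal γ * ‖v‖ₑ ^ p := fun v => by
    rw [← ofReal_norm, ← ofReal_norm,
      ENNReal.ofReal_rpow_of_nonneg (norm_nonneg _) (by linarith), ← ENNReal.ofReal_mul hγ]
    exact ENNReal.ofReal_le_ofReal (hΨ_le v)
  have htri : ‖z‖ₑ ^ p ≤ 2 ^ (p - 1) * (‖z - w‖ₑ ^ p + ‖w‖ₑ ^ p) := by
    calc ‖z‖ₑ ^ p ≤ (‖z - w‖ₑ + ‖w‖ₑ) ^ p := by
          gcongr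
          simpa using enorm_add_le (z - w) w
      _ ≤ _ := ENNReal.rpow_add_le_mul_rpow_add_rpow _ _ hp
  calc ‖Ψ z - Ψ w‖ₑ ≤ ‖Ψ z‖ₑ + ‖Ψ w‖ₑ := enorm_sub_le
    _ ≤ ENNReal.ofReal γ * ‖z‖ₑ ^ p + ENNReal.ofReal γ * ‖w‖ₑ ^ p :=
        add_le_add (henorm z) (henorm w)
    _ ≤ ENNReal.ofReal γ * (2 ^ (p - 1) * (‖z - w‖ₑ ^ p + ‖w‖ₑ ^ p))
          + ENNReal.ofReal γ * ‖w‖ₑ ^ p := by gcongr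
    _ = _ := by ring

theorem tendsto_integral_comp_of_tendsto_eLpNorm [NormedSpace ℝ F] {Ψ : E → F} {γ p : ℝ}
    (hp : 1 ≤ p) (hγ : 0 ≤ γ) (hΨ : Continuous Ψ) (hΨ_le : ∀ z, ‖Ψ z‖ ≤ γ * ‖z‖ ^ p)
    {f : ℕ → X → E} {g : X → E}
    (hf : ∀ n, MemLp (f n) (ENNReal.ofReal p) μ) (hg : MemLp g (ENNReal.ofReal p) μ)
    (hLp : Tendsto (fun n => eLpNorm (f n - g) (ENNReal.ofReal p) μ) atTop (𝓝 0))
    (hae : ∀ᵐ x ∂μ, Tendsto (fun n => f n x) atTop (𝓝 (g x))) :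
    Tendsto (fun n => ∫ x, Ψ (f n x) ∂μ) atTop (𝓝 (∫ x, Ψ (g x) ∂μ)) := by
  have hp0 : 0 < p := by linarith
  refine tendsto_integral_of_L1 _ (hΨ.comp_aestronglyMeasurable hg.1)
    (Eventually.of_forall fun n => (hf n).integrable_comp_of_norm_le_rpow hp0 hΨ hΨ_le) ?_
  refine tendsto_lintegral_zero_of_le_add
    (a := fun n x => ENNReal.ofReal γ * 2 ^ (p - 1) * ‖f n x - g x‖ₑ ^ p)
    (b := fun x => ENNReal.ofReal γ * (2 ^ (p - 1) + 1) * ‖g x‖ₑ ^ p)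
    (fun n => ((hΨ.comp_aestronglyMeasurable (hf n).1).sub
      (hΨ.comp_aestronglyMeasurable hg.1)).enorm)
    ((hg.1.enorm.pow_const p).const_mul _)
    (fun n => ae_of_all _ fun x => enorm_sub_le_of_norm_le_rpow hp hγ hΨ_le (f n x) (g x))
    ?_ ?_ ?_
  · filter_upwards [hae] with x hx
    simpa using (((hΨ.tendsto (g x)).comp hx).sub_const (Ψ (g x))).enorm
  · have := ENNReal.Tendsto.const_mul (hLp.ennrpow_const p) (a := ENNReal.ofReal γ * 2 ^ (p - 1))
      (Or.inr (by finiteness))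
    simp only [ENNReal.zero_rpow_of_pos hp0, mul_zero] at this
    refine this.congr fun n => ?_
    rw [lintegral_const_mul' _ _ (by finiteness)]
    exact congrArg _ (lintegral_enorm_rpow_eq_eLpNorm_rpow hp0 (f n - g)).symm
  · rw [lintegral_const_mul' _ _ (by finiteness), lintegral_enorm_rpow_eq_eLpNorm_rpow hp0]
    exact ENNReal.mul_ne_top (by finiteness)
      (ENNReal.rpow_ne_top_of_nonneg hp0.le hg.eLpNorm_ne_top)

end

theorem norm_comp_re_add_comp_im_le {a b : ℝ → ℝ} {α β p : ℝ} (hp : 0 ≤ p) (hα : 0 ≤ α)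
    (hβ : 0 ≤ β) (ha : ∀ t, |a t| ≤ α * |t| ^ p) (hb : ∀ t, |b t| ≤ β * |t| ^ p) (z : ℂ) :
    ‖a z.re + b z.im‖ ≤ (α + β) * ‖z‖ ^ p := by
  calc ‖a z.re + b z.im‖ ≤ |a z.re| + |b z.im| := norm_add_le _ _
    _ ≤ α * |z.re| ^ p + β * |z.im| ^ p := add_le_add (ha _) (hb _)
    _ ≤ α * ‖z‖ ^ p + β * ‖z‖ ^ p := by
        gcongr
        · exact abs_re_le_norm z
        · exact abs_im_le_norm z
    _ = (α + β) * ‖z‖ ^ p := by ring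

theorem phi_continuous_general {X : Type*} [MeasurableSpace X] (μ : Measure X)
    (p : ℝ) (hp : 1 ≤ p)
    (h₁ h₂ h₃ h₄ : ℝ → ℝ) (γ₁ γ₂ γ₃ γ₄ : ℝ)
    (hc₁ : Continuous h₁) (hc₂ : Continuous h₂) (hc₃ : Continuous h₃) (hc₄ : Continuous h₄)
    (hγ₁ : 0 ≤ γ₁) (hγ₂ : 0 ≤ γ₂) (hγ₃ : 0 ≤ γ₃) (hγ₄ : 0 ≤ γ₄)
    (hb₁ : ∀ a : ℝ, |h₁ a| ≤ γ₁ * |a| ^ p) (hb₂ : ∀ a : ℝ, |h₂ a| ≤ γ₂ * |a| ^ p)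
    (hb₃ : ∀ a : ℝ, |h₃ a| ≤ γ₃ * |a| ^ p) (hb₄ : ∀ a : ℝ, |h₄ a| ≤ γ₄ * |a| ^ p)
    (f : ℕ → X → ℂ) (g : X → ℂ)
    (hf : ∀ j, MemLp (f j) (ENNReal.ofReal p) μ) (hg : MemLp g (ENNReal.ofReal p) μ)
    (hLp : Tendsto (fun j => eLpNorm (f j - g) (ENNReal.ofReal p) μ) atTop (nhds 0))
    (hae : ∀ᵐ x ∂μ, Tendsto (fun j => f j x) atTop (nhds (g x))) :
    Tendsto (fun j => Phi μ h₁ h₂ h₃ h₄ (f j)) atTop (nhds (Phi μ h₁ h₂ h₃ h₄ g)) := by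
  have h_re_im : ∀ {a b : ℝ → ℝ} {α β : ℝ}, Continuous a → Continuous b → 0 ≤ α → 0 ≤ β →
      (∀ t, |a t| ≤ α * |t| ^ p) → (∀ t, |b t| ≤ β * |t| ^ p) →
      Tendsto (fun j => ∫ x, (a (f j x).re + b (f j x).im) ∂μ) atTop
        (𝓝 (∫ x, (a (g x).re + b (g x).im) ∂μ)) :=
    fun hca hcb hα hβ ha hb => tendsto_integral_comp_of_tendsto_eLpNorm hp (add_nonneg hα hβ)
      (by fun_prop) (norm_comp_re_add_comp_im_le (by linarith) hα hβ ha hb) hf hg hLp hae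
  exact ((continuous_ofReal.tendsto _).comp (h_re_im hc₁ hc₃ hγ₁ hγ₃ hb₁ hb₃)).add
    (((continuous_ofReal.tendsto _).comp (h_re_im hc₂ hc₄ hγ₂ hγ₄ hb₂ hb₄)).const_mul I)

theorem phi_continuous {X : Type*} [MeasurableSpace X] (μ : Measure X)
    (hμ : μ Set.univ = ⊤) (p : ℝ) (hp : 1 ≤ p)
    (h₁ h₂ h₃ h₄ : ℝ → ℝ) (γ₁ γ₂ γ₃ γ₄ : ℝ)
    (hc₁ : Continuous h₁) (hc₂ : Continuous h₂) (hc₃ : Continuous h₃) (hc₄ : Continuous h₄)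
    (hγ₁ : 0 ≤ γ₁) (hγ₂ : 0 ≤ γ₂) (hγ₃ : 0 ≤ γ₃) (hγ₄ : 0 ≤ γ₄)
    (hb₁ : ∀ a : ℝ, |h₁ a| ≤ γ₁ * |a| ^ p) (hb₂ : ∀ a : ℝ, |h₂ a| ≤ γ₂ * |a| ^ p)
    (hb₃ : ∀ a : ℝ, |h₃ a| ≤ γ₃ * |a| ^ p) (hb₄ : ∀ a : ℝ, |h₄ a| ≤ γ₄ * |a| ^ p)
    (f : ℕ → X → ℂ) (g : X → ℂ)
    (hf : ∀ j, MemLp (f j) (ENNReal.ofReal p) μ) (hg : MemLp g (ENNReal.ofReal p) μ)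
    (hLp : Tendsto (fun j => eLpNorm (f j - g) (ENNReal.ofReal p) μ) atTop (nhds 0))
    (hae : ∀ᵐ x ∂μ, Tendsto (fun j => f j x) atTop (nhds (g x))) :
    Tendsto (fun j => Phi μ h₁ h₂ h₃ h₄ (f j)) atTop (nhds (Phi μ h₁ h₂ h₃ h₄ g)) :=
  phi_continuous_general μ p hp h₁ h₂ h₃ h₄ γ₁ γ₂ γ₃ γ₄ hc₁ hc₂ hc₃ hc₄ hγ₁ hγ₂ hγ₃ hγ₄ hb₁ hb₂ hb₃
    hb₄ f g hf hg hLp hae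
end
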